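/- arXiv:1605.00138 — 2 statements merged into one kernel-verified Lean document; each statement's English description precedes it below -/
import Mathlib

section
/- (Kostant) Let n ≥ 1, let f ∈ Matₙ(ℂ) be the matrix with (i+1,i) entry 1 for 1 ≤ i ≤ n−1 and all other entries 0, let b ⊆ Matₙ(ℂ) be the subspace of upper triangular matrices, and let S be the set of companion matrices. The adjoint action map N × S → f + b, (u, x) ↦ u·x·u⁻¹, is a bijection. -/
open Matrix

/-- The principal nilpotent matrix `f`, with entries `1` on the subdiagonal
and `0` elsewhere. -/
def fMat (n : ℕ) : Matrix (Fin n) (Fin n) ℂ :=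
  Matrix.of fun i j => if (i : ℕ) = (j : ℕ) + 1 then 1 else 0

/-- A unipotent upper triangular matrix: upper triangular with all diagonal
entries equal to `1` (an element of the group `N`). -/
def IsUniUpper {n : ℕ} (u : Matrix (Fin n) (Fin n) ℂ) : Prop :=
  u.BlockTriangular id ∧ ∀ i : Fin n, u i i = 1

/-- A companion matrix: subdiagonal entries equal 1, the last column is arbitrary,
and all other entries are 0. -/
def IsCompanion {n : ℕ} (M : Matrix (Fin n) (Fin n) ℂ) : Prop :=
  ∀ i j : Fin n, (j : ℕ) + 1 < n →
    (((i : ℕ) = (j : ℕ) + 1 → M i j = 1) ∧ ((i : ℕ) ≠ (j : ℕ) + 1 → M i j = 0))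

/-- Membership in the affine subspace `f + b`, where `b` is the space of upper
triangular matrices. -/
def InFB {n : ℕ} (y : Matrix (Fin n) (Fin n) ℂ) : Prop :=
  (y - fMat n).BlockTriangular id

/-!
For `y ∈ f + b` the entries of `y` below the diagonal are those of `f`, so `y` moves a vector
supported on the first `k + 1` coordinates to one supported on the first `k + 2`, with
coordinate `k + 1` copied from coordinate `k`. Hence the Krylov matrix `K` with columns
`y ^ j e₀` lies in `N`, and `K⁻¹ y K` is a companion matrix because `y` sends each column
of `K` to the next one. Conversely, if `y = u x u⁻¹` with `u ∈ N` and `x` companion, then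
`y ^ j e₀ = u x ^ j e₀ = u e_j`, so `K = u`: the pair `(u, x)` is recovered from `y`.
That `N` preserves `f + b` comes from `u f - f u` being upper triangular.
-/

section

variable {n : ℕ}

lemma fMat_apply (i j : Fin n) : fMat n i j = if (i : ℕ) = j + 1 then 1 else 0 := rfl

lemma fMat_mulVec_succ (v : Fin (n + 1) → ℂ) (i : Fin n) :
    (fMat (n + 1) *ᵥ v) i.succ = v i.castSucc := by
  rw [mulVec, dotProduct, Finset.sum_eq_single i.castSucc] <;>
    simp +contextual [fMat_apply, Fin.ext_iff, eq_comm]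

lemma IsUniUpper.isUnit_det {u : Matrix (Fin n) (Fin n) ℂ} (hu : IsUniUpper u) :
    IsUnit u.det := by
  simp [det_of_isUpperTriangular hu.1, hu.2]

lemma IsUniUpper.blockTriangular_inv {u : Matrix (Fin n) (Fin n) ℂ} (hu : IsUniUpper u) :
    u⁻¹.BlockTriangular id :=
  letI := invertibleOfIsUnitDet u hu.isUnit_det
  blockTriangular_inv_of_blockTriangular hu.1

lemma IsUniUpper.mulVec_single_zero {u : Matrix (Fin (n + 1)) (Fin (n + 1)) ℂ}
    (hu : IsUniUpper u) : u *ᵥ Pi.single 0 1 = Pi.single 0 1 := by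
  ext i
  rw [mulVec_single_one, col_apply]
  rcases eq_or_ne i 0 with rfl | hi
  · simp [hu.2]
  · simp [hi, hu.1 (Fin.pos_iff_ne_zero.mpr hi)]

lemma IsUniUpper.blockTriangular_mul_fMat_sub_fMat_mul {u : Matrix (Fin n) (Fin n) ℂ}
    (hu : IsUniUpper u) : (u * fMat n - fMat n * u).BlockTriangular id := by
  intro i j (hij : j < i)
  set j₁ : Fin n := ⟨j + 1, by omega⟩
  set i₀ : Fin n := ⟨i - 1, by omega⟩
  have hu_f : (u * fMat n) i j = u i j₁ := by
    rw [mul_apply, Finset.sum_eq_single j₁ (fun k _ hk => ?_) (by simp), fMat_apply,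
      if_pos rfl, mul_one]
    rw [fMat_apply, if_neg (fun h => hk (Fin.ext h)), mul_zero]
  have hf_u : (fMat n * u) i j = u i₀ j := by
    rw [mul_apply, Finset.sum_eq_single i₀ (fun k _ hk => ?_) (by simp), fMat_apply,
      if_pos (by simp only [i₀]; omega), one_mul]
    rw [fMat_apply, if_neg (fun h => hk (Fin.ext (by simp only [i₀]; omega))), zero_mul]
  rw [Matrix.sub_apply, hu_f, hf_u, sub_eq_zero]
  rcases (Nat.succ_le_of_lt hij).eq_or_lt with h | h
  · rw [show i₀ = j from Fin.ext (by simp only [i₀]; omega), show j₁ = i from Fin.ext h,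
      hu.2, hu.2]
  · rw [hu.1 (show j₁ < i from h),
      hu.1 (show j < i₀ from by simp only [i₀, Fin.lt_def]; omega)]

lemma InFB.apply_of_lt {y : Matrix (Fin n) (Fin n) ℂ} (hy : InFB y) {i j : Fin n} (hij : j < i) :
    y i j = fMat n i j :=
  sub_eq_zero.mp (hy hij)

lemma InFB.conj {u y : Matrix (Fin n) (Fin n) ℂ} (hu : IsUniUpper u) (hy : InFB y) :
    InFB (u * y * u⁻¹) := by
  have h : u * y * u⁻¹ - fMat n = (u * (y - fMat n) + (u * fMat n - fMat n * u)) * u⁻¹ := by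
    rw [mul_sub, sub_add_sub_cancel, sub_mul, mul_nonsing_inv_cancel_right _ _ hu.isUnit_det]
  unfold InFB
  rw [h]
  exact ((hu.1.mul hy).add hu.blockTriangular_mul_fMat_sub_fMat_mul).mul hu.blockTriangular_inv

lemma IsCompanion.inFB {x : Matrix (Fin n) (Fin n) ℂ} (hx : IsCompanion x) : InFB x := by
  intro i j (hij : j < i)
  have hj : (j : ℕ) + 1 < n := by omega
  rw [Matrix.sub_apply, fMat_apply, sub_eq_zero]
  split_ifs with h
  · exact (hx i j hj).1 h
  · exact (hx i j hj).2 h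

lemma IsCompanion.mulVec_single_castSucc {x : Matrix (Fin (n + 1)) (Fin (n + 1)) ℂ}
    (hx : IsCompanion x) (j : Fin n) : x *ᵥ Pi.single j.castSucc 1 = Pi.single j.succ 1 := by
  ext i
  have hj : (j.castSucc : ℕ) + 1 < n + 1 := by simp
  have hsucc : (i : ℕ) = j.castSucc + 1 ↔ i = j.succ := by simp [Fin.ext_iff]
  rw [mulVec_single_one, col_apply, Pi.single_apply]
  split_ifs with h
  · exact (hx i _ hj).1 (hsucc.mpr h)
  · exact (hx i _ hj).2 (mt hsucc.mp h)

lemma IsCompanion.pow_mulVec_single_zero {x : Matrix (Fin (n + 1)) (Fin (n + 1)) ℂ}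
    (hx : IsCompanion x) (j : Fin (n + 1)) : x ^ (j : ℕ) *ᵥ Pi.single 0 1 = Pi.single j 1 := by
  induction j using Fin.induction with
  | zero => rw [Fin.val_zero, pow_zero, one_mulVec]
  | succ j ih =>
    rw [Fin.val_succ, pow_succ', ← mulVec_mulVec, ← Fin.val_castSucc, ih,
      hx.mulVec_single_castSucc]

def krylov {R : Type*} [Semiring R] (A : Matrix (Fin n) (Fin n) R) (v : Fin n → R) :
    Matrix (Fin n) (Fin n) R :=
  Matrix.of fun i j => (A ^ (j : ℕ) *ᵥ v) i

lemma mul_krylov_apply_castSucc {R : Type*} [Semiring R] (A : Matrix (Fin (n + 1)) (Fin (n + 1)) R)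
    (v : Fin (n + 1) → R) (i : Fin (n + 1)) (j : Fin n) :
    (A * krylov A v) i j.castSucc = krylov A v i j.succ := by
  simp only [krylov, mul_apply, of_apply, Fin.val_succ, Fin.val_castSucc, pow_succ',
    ← mulVec_mulVec]
  rfl

lemma InFB.mulVec_apply_eq_fMat_mulVec {y : Matrix (Fin n) (Fin n) ℂ} (hy : InFB y)
    {v : Fin n → ℂ} {k : Fin n} (hv : ∀ i, k < i → v i = 0) {i : Fin n} (hi : k < i) :
    (y *ᵥ v) i = (fMat n *ᵥ v) i := by
  simp only [mulVec, dotProduct]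
  refine Finset.sum_congr rfl fun m _ => ?_
  rcases lt_or_ge k m with hm | hm
  · simp [hv m hm]
  · rw [hy.apply_of_lt (hm.trans_lt hi)]

lemma InFB.pow_mulVec_single_zero {y : Matrix (Fin (n + 1)) (Fin (n + 1)) ℂ} (hy : InFB y)
    (j : Fin (n + 1)) :
    (∀ i, j < i → (y ^ (j : ℕ) *ᵥ Pi.single 0 1) i = 0) ∧
      (y ^ (j : ℕ) *ᵥ Pi.single 0 1) j = 1 := by
  induction j using Fin.induction with
  | zero => simp +contextual [Fin.ne_of_gt]
  | succ j ih =>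
    set w := y ^ (j.castSucc : ℕ) *ᵥ Pi.single 0 1
    have hstep : y ^ (j.succ : ℕ) *ᵥ Pi.single 0 1 = y *ᵥ w := by
      rw [Fin.val_succ, pow_succ', ← mulVec_mulVec]; rfl
    have hshift : ∀ {i}, j.castSucc < i → (y *ᵥ w) i = (fMat (n + 1) *ᵥ w) i :=
      hy.mulVec_apply_eq_fMat_mulVec ih.1
    rw [hstep]
    refine ⟨fun i hi => ?_, ?_⟩
    · obtain ⟨i, rfl⟩ := Fin.exists_succ_eq.mpr (Fin.ne_zero_of_lt hi)
      rw [hshift (Fin.castSucc_lt_succ.trans hi), fMat_mulVec_succ]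
      exact ih.1 _ (Fin.succ_lt_succ_iff.mp hi)
    · rw [hshift Fin.castSucc_lt_succ, fMat_mulVec_succ, ih.2]

lemma InFB.isUniUpper_krylov {y : Matrix (Fin (n + 1)) (Fin (n + 1)) ℂ} (hy : InFB y) :
    IsUniUpper (krylov y (Pi.single 0 1)) :=
  ⟨fun i j hij => (hy.pow_mulVec_single_zero j).1 i hij,
    fun i => (hy.pow_mulVec_single_zero i).2⟩

lemma InFB.isCompanion_krylov_conj {y : Matrix (Fin (n + 1)) (Fin (n + 1)) ℂ} (hy : InFB y) :
    IsCompanion ((krylov y (Pi.single 0 1))⁻¹ * y * krylov y (Pi.single 0 1)) := by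
  set K := krylov y (Pi.single 0 1)
  intro i j hj
  obtain ⟨j, rfl⟩ : ∃ j' : Fin n, j'.castSucc = j := ⟨⟨j, by omega⟩, rfl⟩
  have hK : (K⁻¹ * y * K) i j.castSucc = (1 : Matrix _ _ ℂ) i j.succ := by
    rw [← nonsing_inv_mul K hy.isUniUpper_krylov.isUnit_det, mul_assoc, mul_apply, mul_apply]
    simp only [K, mul_krylov_apply_castSucc]
  have hsucc : (i : ℕ) = j.castSucc + 1 ↔ i = j.succ := by simp [Fin.ext_iff]
  rw [hK, one_apply]
  exact ⟨fun h => if_pos (hsucc.mp h), fun h => if_neg (mt hsucc.mpr h)⟩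

lemma krylov_conj {u x : Matrix (Fin (n + 1)) (Fin (n + 1)) ℂ} (hu : IsUniUpper u)
    (hx : IsCompanion x) : krylov (u * x * u⁻¹) (Pi.single 0 1) = u := by
  have hsemiconj : SemiconjBy u x (u * x * u⁻¹) :=
    (nonsing_inv_mul_cancel_right _ _ hu.isUnit_det).symm
  ext i j
  rw [krylov, of_apply, ← hu.mulVec_single_zero, mulVec_mulVec, ← (hsemiconj.pow_right j).eq,
    ← mulVec_mulVec, hx.pow_mulVec_single_zero, mulVec_single_one, col_apply]

end

/-- Kostant: the adjoint action map `N × S → f + b`, `(u, x) ↦ u x u⁻¹`, is a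
bijection, where `S` is the set of companion matrices and `b` the upper
triangular matrices. -/
theorem adjoint_action_bijection (n : ℕ) (hn : 1 ≤ n) :
    ∃ Φ : {u : Matrix (Fin n) (Fin n) ℂ // IsUniUpper u} ×
          {x : Matrix (Fin n) (Fin n) ℂ // IsCompanion x} →
          {y : Matrix (Fin n) (Fin n) ℂ // InFB y},
      (∀ p, (Φ p : Matrix (Fin n) (Fin n) ℂ) =
          (p.1 : Matrix (Fin n) (Fin n) ℂ) * (p.2 : Matrix (Fin n) (Fin n) ℂ) *
            (p.1 : Matrix (Fin n) (Fin n) ℂ)⁻¹) ∧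
      Function.Bijective Φ := by
  obtain ⟨n, rfl⟩ : ∃ m, n = m + 1 := ⟨n - 1, by omega⟩
  refine ⟨fun p => ⟨p.1.1 * p.2.1 * p.1.1⁻¹, p.2.2.inFB.conj p.1.2⟩, fun _ => rfl,
    Function.bijective_iff_has_inverse.mpr ⟨fun y => (⟨_, y.2.isUniUpper_krylov⟩,
      ⟨_, y.2.isCompanion_krylov_conj⟩), ?_, ?_⟩⟩
  · rintro ⟨⟨u, hu⟩, ⟨x, hx⟩⟩
    have hx_eq : u⁻¹ * (u * x * u⁻¹) * u = x := by
      rw [mul_assoc, nonsing_inv_mul_cancel_right _ _ hu.isUnit_det,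
        nonsing_inv_mul_cancel_left _ _ hu.isUnit_det]
    simp only [krylov_conj hu hx, hx_eq]
  · rintro ⟨y, hy⟩
    ext1
    simp only [← mul_assoc, mul_nonsing_inv _ hy.isUniUpper_krylov.isUnit_det, one_mul,
      mul_nonsing_inv_cancel_right _ _ hy.isUniUpper_krylov.isUnit_det]
end

section
/- Let n ≥ 1, let f ∈ Matₙ(ℂ) be the matrix with (i+1,i) entry 1 for 1 ≤ i ≤ n−1 and all other entries 0, and let d ∈ Matₙ(ℂ) be a diagonal matrix with pairwise distinct diagonal entries. Then the linear map n × h → b given by (y, z) ↦ [y, f + d] + z is a linear isomorphism, where n is the space of strictly upper triangular matrices, h the space of diagonal matrices, and b the space of upper triangular matrices. -/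
/-!
Write `g = f + diagonal v`. For `i < j`, the `(i, j)` entry of `[y, g]` is
`y i (j+1) - y (i-1) j + (v j - v i) * y i j`, the first two terms being entries of `y` of
strictly larger height `j - i`. Since `v` is injective, a strictly upper triangular `y` with
`[y, g]` diagonal therefore vanishes, by descending induction on the height; this is the
injectivity. For surjectivity, extend `(y, z) ↦ [y, g] + z` to the endomorphism
`x ↦ [U x, g] + (x - U x)` of all matrices, where `U = strictUpperPart`: it is injective by
the same argument, hence surjective, and it maps only upper triangular `x` to upper triangular
matrices.
-/

open Matrix

section StrictUpperPart

variable {ι R : Type*} [LinearOrder ι]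

section CommSemiring

variable [CommSemiring R]

def strictUpperPart : Matrix ι ι R →ₗ[R] Matrix ι ι R where
  toFun x := of fun i j => if i < j then x i j else 0
  map_add' x y := by ext i j; by_cases h : i < j <;> simp [h]
  map_smul' c x := by ext i j; by_cases h : i < j <;> simp [h]

lemma strictUpperPart_apply (x : Matrix ι ι R) (i j : ι) :
    strictUpperPart x i j = if i < j then x i j else 0 := rfl

lemma strictUpperPart_apply_of_le (x : Matrix ι ι R) {i j : ι} (h : j ≤ i) :
    strictUpperPart x i j = 0 := by
  simp [strictUpperPart_apply, not_lt.2 h]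

end CommSemiring

lemma isDiag_sub_strictUpperPart [CommRing R] {x : Matrix ι ι R} (hx : x.BlockTriangular id) :
    (x - strictUpperPart x).IsDiag := by
  intro i j hij
  rcases hij.lt_or_gt with h | h
  · simp [strictUpperPart_apply, h]
  · simp [strictUpperPart_apply, h.not_gt, hx h]

end StrictUpperPart

lemma commutator_diagonal_apply {ι R : Type*} [Fintype ι] [DecidableEq ι] [CommRing R]
    (y : Matrix ι ι R) (v : ι → R) (i j : ι) :
    (y * diagonal v - diagonal v * y) i j = y i j * (v j - v i) := by
  simp only [Matrix.sub_apply, mul_diagonal, diagonal_mul]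
  ring

section Bracket

variable {n : ℕ} {y : Matrix (Fin n) (Fin n) ℂ} {v : Fin n → ℂ}

lemma mul_fMat_apply_eq_zero {i j : Fin n} (h : ∀ k : Fin n, (k : ℕ) = j + 1 → y i k = 0) :
    (y * fMat n) i j = 0 := by
  rw [mul_apply]
  exact Finset.sum_eq_zero fun k _ => by by_cases hk : (k : ℕ) = j + 1 <;> simp [fMat, hk, h]

lemma fMat_mul_apply_eq_zero {i j : Fin n} (h : ∀ k : Fin n, (i : ℕ) = k + 1 → y k j = 0) :
    (fMat n * y) i j = 0 := by
  rw [mul_apply]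
  exact Finset.sum_eq_zero fun k _ => by by_cases hk : (i : ℕ) = k + 1 <;> simp [fMat, hk, h]

lemma commutator_fMat_add_diagonal_apply (y : Matrix (Fin n) (Fin n) ℂ) (v : Fin n → ℂ)
    (i j : Fin n) :
    (y * (fMat n + diagonal v) - (fMat n + diagonal v) * y) i j =
      (y * fMat n) i j - (fMat n * y) i j + y i j * (v j - v i) := by
  rw [← commutator_diagonal_apply, mul_add, add_mul]
  simp only [Matrix.sub_apply, Matrix.add_apply]
  ring

lemma blockTriangular_commutator_fMat_add_diagonal (hy : ∀ i j : Fin n, j ≤ i → y i j = 0) :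
    (y * (fMat n + diagonal v) - (fMat n + diagonal v) * y).BlockTriangular id := by
  intro i j (hji : j < i)
  rw [commutator_fMat_add_diagonal_apply, mul_fMat_apply_eq_zero, fMat_mul_apply_eq_zero,
    hy i j hji.le]
  · ring
  · exact fun k hk => hy k j (Fin.le_def.2 (by omega))
  · exact fun k hk => hy i k (Fin.le_def.2 (by rw [Fin.lt_def] at hji; omega))

lemma eq_zero_of_commutator_fMat_add_diagonal_isDiag (hv : Function.Injective v)
    (hy : ∀ i j : Fin n, j ≤ i → y i j = 0)
    (h : (y * (fMat n + diagonal v) - (fMat n + diagonal v) * y).IsDiag) : y = 0 := by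
  suffices ∀ m : ℕ, ∀ i j : Fin n, n ≤ m + ((j : ℕ) - i) → y i j = 0 by
    ext i j
    exact this n i j (by omega)
  intro m
  induction m with
  | zero => intro i j hm; omega
  | succ m ih =>
    intro i j hm
    rcases le_or_gt j i with hji | hij
    · exact hy i j hji
    rw [Fin.lt_def] at hij
    have hentry := h (Fin.ne_of_lt hij)
    beta_reduce at hentry
    rw [commutator_fMat_add_diagonal_apply, mul_fMat_apply_eq_zero, fMat_mul_apply_eq_zero,
      sub_zero, zero_add] at hentry
    · exact (mul_eq_zero.1 hentry).resolve_right (sub_ne_zero.2 (hv.ne (Fin.ne_of_lt hij).symm))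
    · exact fun k hk => ih k j (by omega)
    · exact fun k hk => ih i k (by omega)

lemma eq_zero_of_commutator_fMat_add_diagonal_add_eq_zero (hv : Function.Injective v)
    (hy : ∀ i j : Fin n, j ≤ i → y i j = 0) {z : Matrix (Fin n) (Fin n) ℂ} (hz : z.IsDiag)
    (h : y * (fMat n + diagonal v) - (fMat n + diagonal v) * y + z = 0) : y = 0 ∧ z = 0 := by
  have hy0 : y = 0 := by
    refine eq_zero_of_commutator_fMat_add_diagonal_isDiag hv hy ?_
    rw [eq_neg_of_add_eq_zero_left h]
    exact hz.neg
  exact ⟨hy0, by simpa [hy0] using h⟩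

end Bracket

section Extension

variable {n : ℕ} {v : Fin n → ℂ}

noncomputable def bracketExtension (n : ℕ) (v : Fin n → ℂ) :
    Matrix (Fin n) (Fin n) ℂ →ₗ[ℂ] Matrix (Fin n) (Fin n) ℂ :=
  (LinearMap.mulRight ℂ (fMat n + diagonal v) -
      LinearMap.mulLeft ℂ (fMat n + diagonal v)) ∘ₗ strictUpperPart +
    (LinearMap.id - strictUpperPart)

lemma bracketExtension_apply (x : Matrix (Fin n) (Fin n) ℂ) :
    bracketExtension n v x =
      strictUpperPart x * (fMat n + diagonal v) - (fMat n + diagonal v) * strictUpperPart x +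
        (x - strictUpperPart x) :=
  rfl

lemma blockTriangular_of_bracketExtension {x : Matrix (Fin n) (Fin n) ℂ}
    (hx : (bracketExtension n v x).BlockTriangular id) : x.BlockTriangular id := by
  intro i j (hji : j < i)
  have hentry := hx hji
  rw [bracketExtension_apply, Matrix.add_apply,
    blockTriangular_commutator_fMat_add_diagonal (fun _ _ => strictUpperPart_apply_of_le x) hji,
    Matrix.sub_apply, strictUpperPart_apply_of_le x hji.le] at hentry
  simpa using hentry

lemma bracketExtension_injective (hv : Function.Injective v) :
    Function.Injective (bracketExtension n v) := by
  rw [← LinearMap.ker_eq_bot, LinearMap.ker_eq_bot']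
  intro x hx
  have hdiag := isDiag_sub_strictUpperPart
    (blockTriangular_of_bracketExtension (hx ▸ blockTriangular_zero))
  rw [bracketExtension_apply] at hx
  obtain ⟨hU, hD⟩ := eq_zero_of_commutator_fMat_add_diagonal_add_eq_zero hv
    (fun _ _ => strictUpperPart_apply_of_le x) hdiag hx
  simpa [hU] using hD

lemma exists_commutator_fMat_add_diagonal_add_eq (hv : Function.Injective v)
    {b : Matrix (Fin n) (Fin n) ℂ} (hb : b.BlockTriangular id) :
    ∃ y z : Matrix (Fin n) (Fin n) ℂ, (∀ i j : Fin n, j ≤ i → y i j = 0) ∧ z.IsDiag ∧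
      y * (fMat n + diagonal v) - (fMat n + diagonal v) * y + z = b := by
  obtain ⟨x, rfl⟩ := LinearMap.injective_iff_surjective.1 (bracketExtension_injective hv) b
  exact ⟨strictUpperPart x, x - strictUpperPart x, fun _ _ => strictUpperPart_apply_of_le x,
    isDiag_sub_strictUpperPart (blockTriangular_of_bracketExtension hb), rfl⟩

end Extension

theorem bracket_with_regular_element_iso_general (n : ℕ)
    (d : Matrix (Fin n) (Fin n) ℂ) (hd : d.IsDiag)
    (hdist : ∀ i j : Fin n, i ≠ j → d i i ≠ d j j) :
    (∀ y z : Matrix (Fin n) (Fin n) ℂ,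
      (∀ i j : Fin n, j ≤ i → y i j = 0) → z.IsDiag →
      ((y * (fMat n + d) - (fMat n + d) * y) + z).BlockTriangular id) ∧
    (∀ y z y' z' : Matrix (Fin n) (Fin n) ℂ,
      (∀ i j : Fin n, j ≤ i → y i j = 0) → z.IsDiag →
      (∀ i j : Fin n, j ≤ i → y' i j = 0) → z'.IsDiag →
      (y * (fMat n + d) - (fMat n + d) * y) + z =
        (y' * (fMat n + d) - (fMat n + d) * y') + z' →
      y = y' ∧ z = z') ∧
    (∀ b : Matrix (Fin n) (Fin n) ℂ, b.BlockTriangular id →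
      ∃ y z : Matrix (Fin n) (Fin n) ℂ,
        (∀ i j : Fin n, j ≤ i → y i j = 0) ∧ z.IsDiag ∧
        (y * (fMat n + d) - (fMat n + d) * y) + z = b) := by
  have hv : Function.Injective d.diag := fun i j hij => by_contra fun hne => hdist i j hne hij
  rw [← hd.diagonal_diag]
  set g := fMat n + diagonal d.diag
  refine ⟨fun y z hy hz => ?_, fun y z y' z' hy hz hy' hz' h => ?_,
    fun b hb => exists_commutator_fMat_add_diagonal_add_eq hv hb⟩
  · rw [← hz.diagonal_diag]
    exact (blockTriangular_commutator_fMat_add_diagonal hy).add (blockTriangular_diagonal _)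
  · have hsub : (y - y') * g - g * (y - y') + (z - z') = 0 := calc
      _ = (y * g - g * y + z) - (y' * g - g * y' + z') := by noncomm_ring
      _ = 0 := sub_eq_zero.2 h
    obtain ⟨hy0, hz0⟩ := eq_zero_of_commutator_fMat_add_diagonal_add_eq_zero hv
      (fun i j hji => by simp [hy i j hji, hy' i j hji]) (hz.sub hz') hsub
    exact ⟨sub_eq_zero.1 hy0, sub_eq_zero.1 hz0⟩

/-- For a diagonal matrix `d` with pairwise distinct diagonal entries, the linear
map `n × h → b`, `(y, z) ↦ [y, f + d] + z`, is a linear isomorphism: it is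
well defined into `b`, injective, and surjective onto `b`. Here `n`, `h`, `b` are
respectively the strictly upper triangular, diagonal, and upper triangular
matrices. -/
theorem bracket_with_regular_element_iso (n : ℕ) (hn : 1 ≤ n)
    (d : Matrix (Fin n) (Fin n) ℂ) (hd : d.IsDiag)
    (hdist : ∀ i j : Fin n, i ≠ j → d i i ≠ d j j) :
    (∀ y z : Matrix (Fin n) (Fin n) ℂ,
      (∀ i j : Fin n, j ≤ i → y i j = 0) → z.IsDiag →
      ((y * (fMat n + d) - (fMat n + d) * y) + z).BlockTriangular id) ∧
    (∀ y z y' z' : Matrix (Fin n) (Fin n) ℂ,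
      (∀ i j : Fin n, j ≤ i → y i j = 0) → z.IsDiag →
      (∀ i j : Fin n, j ≤ i → y' i j = 0) → z'.IsDiag →
      (y * (fMat n + d) - (fMat n + d) * y) + z =
        (y' * (fMat n + d) - (fMat n + d) * y') + z' →
      y = y' ∧ z = z') ∧
    (∀ b : Matrix (Fin n) (Fin n) ℂ, b.BlockTriangular id →
      ∃ y z : Matrix (Fin n) (Fin n) ℂ,
        (∀ i j : Fin n, j ≤ i → y i j = 0) ∧ z.IsDiag ∧
        (y * (fMat n + d) - (fMat n + d) * y) + z = b) :=
  bracket_with_regular_element_iso_general n d hd hdist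
end
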